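/- In the reflection algebra B(g_N), comparing coefficients of u^{-1} v^{-1} in the reflection equation yields the relation S_1 S_2 - S_2 S_1 = 2 S_1 (P - Q) - 2 (P - Q) S_1, where S = [s_{ij}^{(1)}] is the matrix of first-order generators. Consequently, the assignment F_{ij} ↦ (1/4)(s_{ij}^{(1)} - s'^{(1)}_{ij}) defines an algebra homomorphism U(g_N) → B(g_N), where S' = G S^t G^{-1}. -/

import Mathlib

open Matrix
open scoped Kronecker BigOperators

noncomputable section

/-- The permutation operator `P = Σ_{i,j} e_{ij} ⊗ e_{ji}` on `ℂ^N ⊗ ℂ^N`. -/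
def Pop (N : ℕ) : Matrix (Fin N × Fin N) (Fin N × Fin N) ℂ :=
  ∑ i : Fin N, ∑ j : Fin N,
    (Matrix.single i j (1 : ℂ)) ⊗ₖ (Matrix.single j i (1 : ℂ))

/-- The partial transpose `P^t = Σ_{i,j} e_{ij} ⊗ e_{ij}`. -/
def Ptop (N : ℕ) : Matrix (Fin N × Fin N) (Fin N × Fin N) ℂ :=
  ∑ i : Fin N, ∑ j : Fin N,
    (Matrix.single i j (1 : ℂ)) ⊗ₖ (Matrix.single i j (1 : ℂ))

/-- `Q = G₁ P^t G₁⁻¹`. -/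
def Qop (N : ℕ) (G : Matrix (Fin N) (Fin N) ℂ) : Matrix (Fin N × Fin N) (Fin N × Fin N) ℂ :=
  (G ⊗ₖ (1 : Matrix (Fin N) (Fin N) ℂ)) * Ptop N * (G⁻¹ ⊗ₖ (1 : Matrix (Fin N) (Fin N) ℂ))

variable {N : ℕ} {A : Type*}

/-- Embedding `M ↦ M ⊗ 1` of an `A`-valued matrix into the first tensor factor. -/
def emb1 [Ring A] (M : Matrix (Fin N) (Fin N) A) :
    Matrix (Fin N × Fin N) (Fin N × Fin N) A :=
  Matrix.of fun p q => if p.2 = q.2 then M p.1 q.1 else 0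

/-- Embedding `M ↦ 1 ⊗ M` of an `A`-valued matrix into the second tensor factor. -/
def emb2 [Ring A] (M : Matrix (Fin N) (Fin N) A) :
    Matrix (Fin N × Fin N) (Fin N × Fin N) A :=
  Matrix.of fun p q => if p.1 = q.1 then M p.2 q.2 else 0

/-!
Write `Δ = P - Q`. The partial transpose in the first tensor factor, followed by conjugation by
`G₁`, sends `S₁ ↦ S'₁`, fixes `S₂`, reverses products with `S₁`, and sends `Δ ↦ -Δ`
(because `Gᵀ = ±G`). Applied to `[S₁, S₂] = 2 [S₁, Δ]` it gives `[S'₁, S₂] = 2 [S'₁, Δ]`; doing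
the same in the second factor (via conjugation by `P`, which commutes with `Δ`) gives
`[S₁, S'₂] = -2 [S₁, Δ]` and `[S'₁, S'₂] = -2 [S'₁, Δ]`. Adding up,
`[S₁ - S'₁, S₂ - S'₂] = 4 [S₁ - S'₁, Δ]`, which for `F = (S - S')/4` is `[F₁, F₂] = [F₁, Δ]`.
Finally `S ↦ S'` is a linear involution, so `F' = -F`.
-/

section Embeddings

variable [Ring A]

lemma emb1_mul_apply (M : Matrix (Fin N) (Fin N) A)
    (D : Matrix (Fin N × Fin N) (Fin N × Fin N) A) (p q : Fin N × Fin N) :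
    (emb1 M * D) p q = ∑ k, M p.1 k * D (k, p.2) q := by
  simp [emb1, Matrix.mul_apply, Fintype.sum_prod_type, ite_mul]

lemma mul_emb1_apply (M : Matrix (Fin N) (Fin N) A)
    (D : Matrix (Fin N × Fin N) (Fin N × Fin N) A) (p q : Fin N × Fin N) :
    (D * emb1 M) p q = ∑ k, D p (k, q.2) * M k q.1 := by
  simp [emb1, Matrix.mul_apply, Fintype.sum_prod_type, mul_ite]

lemma emb2_mul_apply (M : Matrix (Fin N) (Fin N) A)
    (D : Matrix (Fin N × Fin N) (Fin N × Fin N) A) (p q : Fin N × Fin N) :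
    (emb2 M * D) p q = ∑ k, M p.2 k * D (p.1, k) q := by
  simp [emb2, Matrix.mul_apply, Fintype.sum_prod_type, ite_mul]

lemma mul_emb2_apply (M : Matrix (Fin N) (Fin N) A)
    (D : Matrix (Fin N × Fin N) (Fin N × Fin N) A) (p q : Fin N × Fin N) :
    (D * emb2 M) p q = ∑ k, D p (q.1, k) * M k q.2 := by
  simp [emb2, Matrix.mul_apply, Fintype.sum_prod_type, mul_ite]

lemma emb1_one : emb1 (1 : Matrix (Fin N) (Fin N) A) = 1 := by
  ext p q
  simp only [emb1, Matrix.of_apply, Matrix.one_apply, Prod.ext_iff]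
  split_ifs <;> simp_all

lemma emb1_mul (M M' : Matrix (Fin N) (Fin N) A) : emb1 (M * M') = emb1 M * emb1 M' := by
  ext p q
  rw [emb1_mul_apply]
  simp [emb1, Matrix.mul_apply, mul_ite]

lemma emb1_sub (M M' : Matrix (Fin N) (Fin N) A) : emb1 (M - M') = emb1 M - emb1 M' := by
  ext p q
  simp only [emb1, Matrix.of_apply, Matrix.sub_apply]
  split_ifs <;> simp

lemma emb2_sub (M M' : Matrix (Fin N) (Fin N) A) : emb2 (M - M') = emb2 M - emb2 M' := by
  ext p q
  simp only [emb2, Matrix.of_apply, Matrix.sub_apply]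
  split_ifs <;> simp

lemma emb1_smul {R : Type*} [SMulZeroClass R A] (c : R) (M : Matrix (Fin N) (Fin N) A) :
    emb1 (c • M) = c • emb1 M := by
  ext p q
  simp only [emb1, Matrix.of_apply, Matrix.smul_apply]
  split_ifs <;> simp

lemma emb2_smul {R : Type*} [SMulZeroClass R A] (c : R) (M : Matrix (Fin N) (Fin N) A) :
    emb2 (c • M) = c • emb2 M := by
  ext p q
  simp only [emb2, Matrix.of_apply, Matrix.smul_apply]
  split_ifs <;> simp

lemma emb1_map {B : Type*} [Ring B] (f : A →+* B) (M : Matrix (Fin N) (Fin N) A) :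
    emb1 (M.map f) = (emb1 M).map f := by
  ext p q
  simp only [emb1, Matrix.of_apply, Matrix.map_apply]
  split_ifs <;> simp

lemma commute_emb1_emb2 {M M' : Matrix (Fin N) (Fin N) A}
    (h : ∀ i j k l, Commute (M i j) (M' k l)) : Commute (emb1 M) (emb2 M') := by
  ext p q
  rw [emb1_mul_apply, emb2_mul_apply]
  simp [emb1, emb2, mul_ite, (h _ _ _ _).eq]

end Embeddings

/-- The partial transpose `D ↦ D^{t₁}` in the first tensor factor. -/
def partialTranspose1 {R m n : Type*} (D : Matrix (m × n) (m × n) R) : Matrix (m × n) (m × n) R :=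
  Matrix.of fun p q => D (q.1, p.2) (p.1, q.2)

lemma partialTranspose1_sub {R m n : Type*} [Sub R] (D D' : Matrix (m × n) (m × n) R) :
    partialTranspose1 (D - D') = partialTranspose1 D - partialTranspose1 D' := rfl

lemma partialTranspose1_smul {S R m n : Type*} [SMul S R] (c : S) (D : Matrix (m × n) (m × n) R) :
    partialTranspose1 (c • D) = c • partialTranspose1 D := rfl

section PartialTranspose

variable [Ring A]

lemma partialTranspose1_emb1 (M : Matrix (Fin N) (Fin N) A) :
    partialTranspose1 (emb1 M) = emb1 Mᵀ := rfl

lemma partialTranspose1_emb1_mul {M : Matrix (Fin N) (Fin N) A}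
    {D : Matrix (Fin N × Fin N) (Fin N × Fin N) A} (h : ∀ i j p q, Commute (M i j) (D p q)) :
    partialTranspose1 (emb1 M * D) = partialTranspose1 D * emb1 Mᵀ := by
  ext p q
  simp only [partialTranspose1, Matrix.of_apply, emb1_mul_apply, mul_emb1_apply]
  exact Finset.sum_congr rfl fun k _ => (h _ _ _ _).eq

lemma partialTranspose1_mul_emb1 {M : Matrix (Fin N) (Fin N) A}
    {D : Matrix (Fin N × Fin N) (Fin N × Fin N) A} (h : ∀ i j p q, Commute (M i j) (D p q)) :
    partialTranspose1 (D * emb1 M) = emb1 Mᵀ * partialTranspose1 D := by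
  ext p q
  simp only [partialTranspose1, Matrix.of_apply, emb1_mul_apply, mul_emb1_apply]
  exact Finset.sum_congr rfl fun k _ => (h _ _ _ _).eq.symm

lemma partialTranspose1_emb2_mul (M : Matrix (Fin N) (Fin N) A)
    (D : Matrix (Fin N × Fin N) (Fin N × Fin N) A) :
    partialTranspose1 (emb2 M * D) = emb2 M * partialTranspose1 D := by
  ext p q
  simp only [partialTranspose1, Matrix.of_apply, emb2_mul_apply]

lemma partialTranspose1_mul_emb2 (M : Matrix (Fin N) (Fin N) A)
    (D : Matrix (Fin N × Fin N) (Fin N × Fin N) A) :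
    partialTranspose1 (D * emb2 M) = partialTranspose1 D * emb2 M := by
  ext p q
  simp only [partialTranspose1, Matrix.of_apply, mul_emb2_apply]

end PartialTranspose

section ComplexMatrices

lemma Pop_apply (p q : Fin N × Fin N) :
    Pop N p q = if p.1 = q.2 ∧ p.2 = q.1 then 1 else 0 := by
  simp only [Pop, Matrix.sum_apply, Matrix.kroneckerMap_apply, Matrix.single, Matrix.of_apply]
  simp [ite_and, and_comm, eq_comm]

lemma Ptop_apply (p q : Fin N × Fin N) :
    Ptop N p q = if p.1 = p.2 ∧ q.1 = q.2 then 1 else 0 := by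
  simp only [Ptop, Matrix.sum_apply, Matrix.kroneckerMap_apply, Matrix.single, Matrix.of_apply]
  simp [ite_and, eq_comm]

lemma partialTranspose1_Pop : partialTranspose1 (Pop N) = Ptop N := by
  ext p q
  simp only [partialTranspose1, Matrix.of_apply, Pop_apply, Ptop_apply]
  split_ifs <;> first | rfl | tauto

lemma partialTranspose1_Ptop : partialTranspose1 (Ptop N) = Pop N := by
  ext p q
  simp only [partialTranspose1, Matrix.of_apply, Pop_apply, Ptop_apply]
  split_ifs <;> first | rfl | tauto

lemma kronecker_one_eq_emb1 (M : Matrix (Fin N) (Fin N) ℂ) :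
    M ⊗ₖ (1 : Matrix (Fin N) (Fin N) ℂ) = emb1 M := by
  ext p q
  simp [Matrix.kroneckerMap_apply, Matrix.one_apply, emb1, mul_ite]

lemma Qop_eq (G : Matrix (Fin N) (Fin N) ℂ) : Qop N G = emb1 G * Ptop N * emb1 G⁻¹ := by
  rw [Qop, kronecker_one_eq_emb1, kronecker_one_eq_emb1]

lemma Qop_apply (G : Matrix (Fin N) (Fin N) ℂ) (p q : Fin N × Fin N) :
    Qop N G p q = G p.1 p.2 * G⁻¹ q.2 q.1 := by
  rw [Qop_eq, Matrix.mul_assoc, emb1_mul_apply]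
  simp [mul_emb1_apply, Ptop_apply, ite_and, Finset.sum_ite_eq']

variable {G : Matrix (Fin N) (Fin N) ℂ} {e : ℂ}

lemma transpose_inv_eq_inv_smul (hG : IsUnit G.det) (he : e ≠ 0) (hGt : Gᵀ = e • G) :
    G⁻¹ᵀ = e⁻¹ • G⁻¹ := by
  rw [Matrix.transpose_nonsing_inv, hGt]
  exact Matrix.inv_smul' G (Units.mk0 e he) hG

lemma Pop_submatrix_swap : (Pop N).submatrix Prod.swap Prod.swap = Pop N := by
  ext p q
  simp [Pop_apply, and_comm]

lemma Qop_submatrix_swap (hG : IsUnit G.det) (he : e ≠ 0) (hGt : Gᵀ = e • G) :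
    (Qop N G).submatrix Prod.swap Prod.swap = Qop N G := by
  ext p q
  have hG' := congrFun₂ (transpose_inv_eq_inv_smul hG he hGt) q.2 q.1
  rw [Matrix.submatrix_apply, Qop_apply, Qop_apply, Prod.fst_swap, Prod.snd_swap, Prod.fst_swap,
    Prod.snd_swap, ← Matrix.transpose_apply G, hGt, ← Matrix.transpose_apply G⁻¹ q.2 q.1, hG']
  simp only [Matrix.smul_apply, smul_eq_mul]
  field_simp

lemma conj_partialTranspose1_Qop (hG : IsUnit G.det) (he : e ≠ 0) (hGt : Gᵀ = e • G) :
    emb1 G * partialTranspose1 (Qop N G) * emb1 G⁻¹ = Pop N := by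
  have hGG : emb1 G * emb1 G⁻¹ = 1 := by rw [← emb1_mul, G.mul_nonsing_inv hG, emb1_one]
  have hcomm : ∀ (M : Matrix (Fin N) (Fin N) ℂ) (D : Matrix (Fin N × Fin N) (Fin N × Fin N) ℂ)
      i j p q, Commute (M i j) (D p q) := fun _ _ _ _ _ _ => Commute.all _ _
  rw [Qop_eq, Matrix.mul_assoc (emb1 G) (Ptop N), partialTranspose1_emb1_mul (hcomm _ _),
    partialTranspose1_mul_emb1 (hcomm _ _), partialTranspose1_Ptop,
    transpose_inv_eq_inv_smul hG he hGt, hGt, emb1_smul, emb1_smul]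
  simp only [Matrix.smul_mul, Matrix.mul_smul, smul_smul, mul_inv_cancel₀ he, one_smul]
  calc emb1 G * (emb1 G⁻¹ * Pop N * emb1 G) * emb1 G⁻¹
      = (emb1 G * emb1 G⁻¹) * Pop N * (emb1 G * emb1 G⁻¹) := by noncomm_ring
    _ = Pop N := by rw [hGG, one_mul, mul_one]

lemma conj_partialTranspose1_Pop_sub_Qop (hG : IsUnit G.det) (he : e ≠ 0) (hGt : Gᵀ = e • G) :
    emb1 G * partialTranspose1 (Pop N - Qop N G) * emb1 G⁻¹ = -(Pop N - Qop N G) := by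
  rw [partialTranspose1_sub, mul_sub, sub_mul, conj_partialTranspose1_Qop hG he hGt,
    partialTranspose1_Pop, ← Qop_eq, neg_sub]

end ComplexMatrices

-- The commutator Lie ring structure of an associative ring is not a global instance.
attribute [local instance] LieRing.ofAssociativeRing

lemma conj_lie {n R : Type*} [Fintype n] [DecidableEq n] [Ring R] {g g' : Matrix n n R}
    (h : g' * g = 1) (a b : Matrix n n R) :
    g * ⁅a, b⁆ * g' = ⁅g * a * g', g * b * g'⁆ := by
  simp only [Ring.lie_def]
  calc g * (a * b - b * a) * g' = g * a * (g' * g) * b * g' - g * b * (g' * g) * a * g' := by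
        rw [h]; noncomm_ring
    _ = g * a * g' * (g * b * g') - g * b * g' * (g * a * g') := by noncomm_ring

section PartialTransposeLie

variable [Ring A]

lemma partialTranspose1_lie_emb1_emb2 (M M' : Matrix (Fin N) (Fin N) A) :
    partialTranspose1 ⁅emb1 M, emb2 M'⁆ = ⁅emb1 Mᵀ, emb2 M'⁆ := by
  simp only [Ring.lie_def, partialTranspose1_sub, partialTranspose1_mul_emb2,
    partialTranspose1_emb2_mul, partialTranspose1_emb1]

lemma partialTranspose1_lie_emb1 {M : Matrix (Fin N) (Fin N) A}
    {D : Matrix (Fin N × Fin N) (Fin N × Fin N) A} (h : ∀ i j p q, Commute (M i j) (D p q)) :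
    partialTranspose1 ⁅emb1 M, D⁆ = ⁅partialTranspose1 D, emb1 Mᵀ⁆ := by
  rw [Ring.lie_def, Ring.lie_def, partialTranspose1_sub, partialTranspose1_emb1_mul h,
    partialTranspose1_mul_emb1 h]

lemma partialTranspose1_lie_emb2 (D : Matrix (Fin N × Fin N) (Fin N × Fin N) A)
    (M : Matrix (Fin N) (Fin N) A) :
    partialTranspose1 ⁅D, emb2 M⁆ = ⁅partialTranspose1 D, emb2 M⁆ := by
  rw [Ring.lie_def, Ring.lie_def, partialTranspose1_sub, partialTranspose1_emb2_mul,
    partialTranspose1_mul_emb2]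

end PartialTransposeLie

section ReflectionRelations

variable [Ring A] [Algebra ℂ A]

lemma commute_map_apply {m n : Type*} (C : Matrix m n ℂ) (i : m) (j : n) (a : A) :
    Commute (C.map (algebraMap ℂ A) i j) a :=
  Algebra.commutes _ _

def gTranspose (G : Matrix (Fin N) (Fin N) ℂ) (M : Matrix (Fin N) (Fin N) A) :
    Matrix (Fin N) (Fin N) A :=
  G.map (algebraMap ℂ A) * Mᵀ * G⁻¹.map (algebraMap ℂ A)

variable {G : Matrix (Fin N) (Fin N) ℂ}

lemma emb1_map_inv_mul_emb1_map (hG : IsUnit G.det) :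
    emb1 (G⁻¹.map (algebraMap ℂ A)) * emb1 (G.map (algebraMap ℂ A)) = 1 := by
  rw [← emb1_mul, ← Matrix.map_mul, G.nonsing_inv_mul hG,
    Matrix.map_one _ (map_zero _) (map_one _), emb1_one]

lemma emb1_map_mul_emb1_map_inv (hG : IsUnit G.det) :
    emb1 (G.map (algebraMap ℂ A)) * emb1 (G⁻¹.map (algebraMap ℂ A)) = 1 := by
  rw [← emb1_mul, ← Matrix.map_mul, G.mul_nonsing_inv hG,
    Matrix.map_one _ (map_zero _) (map_one _), emb1_one]

lemma conj_emb2 (hG : IsUnit G.det) (M : Matrix (Fin N) (Fin N) A) :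
    emb1 (G.map (algebraMap ℂ A)) * emb2 M * emb1 (G⁻¹.map (algebraMap ℂ A)) = emb2 M := by
  rw [(commute_emb1_emb2 fun _ _ _ _ => commute_map_apply G _ _ _).eq, mul_assoc,
    emb1_map_mul_emb1_map_inv hG, mul_one]

lemma conj_emb1_transpose (M : Matrix (Fin N) (Fin N) A) :
    emb1 (G.map (algebraMap ℂ A)) * emb1 Mᵀ * emb1 (G⁻¹.map (algebraMap ℂ A)) =
      emb1 (gTranspose G M) := by
  rw [gTranspose, emb1_mul, emb1_mul]

lemma conj_partialTranspose1_map (C : Matrix (Fin N × Fin N) (Fin N × Fin N) ℂ) :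
    emb1 (G.map (algebraMap ℂ A)) * partialTranspose1 (C.map (algebraMap ℂ A)) *
      emb1 (G⁻¹.map (algebraMap ℂ A)) =
        (emb1 G * partialTranspose1 C * emb1 G⁻¹).map (algebraMap ℂ A) := by
  rw [Matrix.map_mul, Matrix.map_mul, emb1_map, emb1_map]
  rfl

lemma lie_emb1_gTranspose_emb2 (hG : IsUnit G.det) {C : Matrix (Fin N × Fin N) (Fin N × Fin N) ℂ}
    (hC : emb1 G * partialTranspose1 C * emb1 G⁻¹ = -C) {M M' : Matrix (Fin N) (Fin N) A} {c : ℂ}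
    (h : ⁅emb1 M, emb2 M'⁆ = c • ⁅emb1 M, C.map (algebraMap ℂ A)⁆) :
    ⁅emb1 (gTranspose G M), emb2 M'⁆ = c • ⁅emb1 (gTranspose G M), C.map (algebraMap ℂ A)⁆ := by
  have h' := congrArg (fun D => emb1 (G.map (algebraMap ℂ A)) * partialTranspose1 D *
    emb1 (G⁻¹.map (algebraMap ℂ A))) h
  simp only [partialTranspose1_smul, partialTranspose1_lie_emb1_emb2,
    partialTranspose1_lie_emb1 fun _ _ _ _ => (commute_map_apply C _ _ _).symm, mul_smul_comm,
    smul_mul_assoc, conj_lie (emb1_map_inv_mul_emb1_map hG), conj_emb2 hG, conj_emb1_transpose,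
    conj_partialTranspose1_map, hC, Matrix.map_neg _ (map_neg (algebraMap ℂ A)), neg_lie] at h'
  rw [h', lie_skew]

lemma lie_emb1_gTranspose_emb2_of_lie_right (hG : IsUnit G.det)
    {C : Matrix (Fin N × Fin N) (Fin N × Fin N) ℂ}
    (hC : emb1 G * partialTranspose1 C * emb1 G⁻¹ = -C) {M M' : Matrix (Fin N) (Fin N) A} {c : ℂ}
    (h : ⁅emb1 M, emb2 M'⁆ = c • ⁅C.map (algebraMap ℂ A), emb2 M'⁆) :
    ⁅emb1 (gTranspose G M), emb2 M'⁆ = -c • ⁅C.map (algebraMap ℂ A), emb2 M'⁆ := by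
  have h' := congrArg (fun D => emb1 (G.map (algebraMap ℂ A)) * partialTranspose1 D *
    emb1 (G⁻¹.map (algebraMap ℂ A))) h
  simp only [partialTranspose1_smul, partialTranspose1_lie_emb2, partialTranspose1_emb1,
    mul_smul_comm, smul_mul_assoc, conj_lie (emb1_map_inv_mul_emb1_map hG), conj_emb2 hG,
    conj_emb1_transpose, conj_partialTranspose1_map, hC,
    Matrix.map_neg _ (map_neg (algebraMap ℂ A)), neg_lie] at h'
  rw [h', neg_smul, smul_neg]

lemma reindex_prodComm_emb1 (M : Matrix (Fin N) (Fin N) A) :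
    Matrix.reindexAlgEquiv ℂ A (Equiv.prodComm (Fin N) (Fin N)) (emb1 M) = emb2 M := rfl

lemma reindex_prodComm_emb2 (M : Matrix (Fin N) (Fin N) A) :
    Matrix.reindexAlgEquiv ℂ A (Equiv.prodComm (Fin N) (Fin N)) (emb2 M) = emb1 M := rfl

-- Reindexing by the flip `(i, j) ↦ (j, i)`, i.e. conjugation by `P`, exchanges the two factors.
lemma lie_emb1_emb2_swap_iff {C : Matrix (Fin N × Fin N) (Fin N × Fin N) ℂ}
    (hC : C.submatrix Prod.swap Prod.swap = C) {M M' : Matrix (Fin N) (Fin N) A} {c : ℂ} :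
    ⁅emb1 M, emb2 M'⁆ = c • ⁅emb1 M, C.map (algebraMap ℂ A)⁆ ↔
      ⁅emb1 M', emb2 M⁆ = c • ⁅C.map (algebraMap ℂ A), emb2 M⁆ := by
  have hσ : Matrix.reindexAlgEquiv ℂ A (Equiv.prodComm (Fin N) (Fin N)) (C.map (algebraMap ℂ A)) =
      C.map (algebraMap ℂ A) := by
    conv_rhs => rw [← hC]
    rfl
  constructor <;> intro h
  all_goals
    have h' := congrArg (Matrix.reindexAlgEquiv ℂ A (Equiv.prodComm (Fin N) (Fin N))) h
    simp only [Ring.lie_def, map_sub, map_mul, map_smul, reindex_prodComm_emb1,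
      reindex_prodComm_emb2, hσ] at h'
    simp only [← Ring.lie_def] at h'
    rw [← lie_skew, h', ← smul_neg, lie_skew]

-- The partial transpose in the second factor, obtained from the first one by swapping factors.
lemma lie_emb1_emb2_gTranspose (hG : IsUnit G.det) {C : Matrix (Fin N × Fin N) (Fin N × Fin N) ℂ}
    (hCt : emb1 G * partialTranspose1 C * emb1 G⁻¹ = -C) (hCs : C.submatrix Prod.swap Prod.swap = C)
    {M M' : Matrix (Fin N) (Fin N) A} {c : ℂ}
    (h : ⁅emb1 M, emb2 M'⁆ = c • ⁅emb1 M, C.map (algebraMap ℂ A)⁆) :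
    ⁅emb1 M, emb2 (gTranspose G M')⁆ = -c • ⁅emb1 M, C.map (algebraMap ℂ A)⁆ :=
  (lie_emb1_emb2_swap_iff hCs).2 <|
    lie_emb1_gTranspose_emb2_of_lie_right hG hCt ((lie_emb1_emb2_swap_iff hCs).1 h)

lemma lie_emb1_emb2_sub_gTranspose (hG : IsUnit G.det)
    {C : Matrix (Fin N × Fin N) (Fin N × Fin N) ℂ}
    (hCt : emb1 G * partialTranspose1 C * emb1 G⁻¹ = -C) (hCs : C.submatrix Prod.swap Prod.swap = C)
    {S : Matrix (Fin N) (Fin N) A} {c : ℂ}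
    (h : ⁅emb1 S, emb2 S⁆ = c • ⁅emb1 S, C.map (algebraMap ℂ A)⁆) :
    ⁅emb1 (S - gTranspose G S), emb2 (S - gTranspose G S)⁆ =
      (2 * c) • ⁅emb1 (S - gTranspose G S), C.map (algebraMap ℂ A)⁆ := by
  have hS'S := lie_emb1_gTranspose_emb2 hG hCt h
  have hSS' := lie_emb1_emb2_gTranspose hG hCt hCs h
  have hS'S' := lie_emb1_emb2_gTranspose hG hCt hCs hS'S
  simp only [emb1_sub, emb2_sub, sub_lie, lie_sub, h, hS'S, hSS', hS'S']
  module

lemma transpose_map_mul (C : Matrix (Fin N) (Fin N) ℂ) (M : Matrix (Fin N) (Fin N) A) :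
    (C.map (algebraMap ℂ A) * M)ᵀ = Mᵀ * Cᵀ.map (algebraMap ℂ A) := by
  ext i j
  simp only [Matrix.transpose_apply, Matrix.mul_apply, Matrix.map_apply]
  exact Finset.sum_congr rfl fun k _ => (Algebra.commutes _ _)

lemma transpose_mul_map (C : Matrix (Fin N) (Fin N) ℂ) (M : Matrix (Fin N) (Fin N) A) :
    (M * C.map (algebraMap ℂ A))ᵀ = Cᵀ.map (algebraMap ℂ A) * Mᵀ := by
  ext i j
  simp only [Matrix.transpose_apply, Matrix.mul_apply, Matrix.map_apply]
  exact Finset.sum_congr rfl fun k _ => (Algebra.commutes _ _).symm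

lemma gTranspose_sub (M M' : Matrix (Fin N) (Fin N) A) :
    gTranspose G (M - M') = gTranspose G M - gTranspose G M' := by
  rw [gTranspose, gTranspose, gTranspose, Matrix.transpose_sub, Matrix.mul_sub, Matrix.sub_mul]

lemma gTranspose_smul (c : ℂ) (M : Matrix (Fin N) (Fin N) A) :
    gTranspose G (c • M) = c • gTranspose G M := by
  rw [gTranspose, gTranspose, Matrix.transpose_smul, Matrix.mul_smul, Matrix.smul_mul]

lemma gTranspose_gTranspose {e : ℂ} (hG : IsUnit G.det) (he : e ≠ 0) (hGt : Gᵀ = e • G)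
    (M : Matrix (Fin N) (Fin N) A) : gTranspose G (gTranspose G M) = M := by
  have hmap : ∀ (c : ℂ) (C : Matrix (Fin N) (Fin N) ℂ),
      (c • C).map (algebraMap ℂ A) = c • C.map (algebraMap ℂ A) := fun c C =>
    Matrix.map_smul _ c (fun a => by rw [smul_eq_mul, map_mul, Algebra.smul_def]) C
  rw [gTranspose, gTranspose, transpose_mul_map, transpose_map_mul, Matrix.transpose_transpose,
    transpose_inv_eq_inv_smul hG he hGt, hGt, hmap, hmap]
  simp only [Matrix.smul_mul, Matrix.mul_smul, smul_smul, mul_inv_cancel₀ he, one_smul]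
  calc _ = (G * G⁻¹).map (algebraMap ℂ A) * M * (G * G⁻¹).map (algebraMap ℂ A) := by
        simp only [Matrix.map_mul, Matrix.mul_assoc]
    _ = M := by
        rw [G.mul_nonsing_inv hG, Matrix.map_one _ (map_zero _) (map_one _), Matrix.one_mul,
          Matrix.mul_one]

end ReflectionRelations

/-- In the reflection algebra `B(𝔤_N)`, the degree-`(1,1)` coefficient of the reflection
equation yields the relation `S₁S₂ - S₂S₁ = 2S₁(P - Q) - 2(P - Q)S₁` for the matrix
`S = [s_{ij}^{(1)}]` of first-order generators.  Consequently the assignment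
`F_{ij} ↦ (1/4)(s_{ij}^{(1)} - s'^{(1)}_{ij})`, i.e. `F ↦ (1/4)(S - S')` with
`S' = G Sᵀ G⁻¹`, defines an algebra homomorphism `U(𝔤_N) → B(𝔤_N)`: the image matrix
satisfies the defining relations `F₁F₂ - F₂F₁ = F₁(P-Q) - (P-Q)F₁` and `F + F' = 0`
of `U(𝔤_N)`. -/
theorem embedding_U_in_reflection_algebra [Ring A] [Algebra ℂ A]
    (G : Matrix (Fin N) (Fin N) ℂ) (hG : IsUnit G.det)
    (e : ℂ) (he : (e = 1 ∧ Gᵀ = G) ∨ (e = -1 ∧ Gᵀ = -G))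
    (S : Matrix (Fin N) (Fin N) A)
    (hrel : emb1 S * emb2 S - emb2 S * emb1 S =
      (2 : ℂ) • (emb1 S * ((Pop N).map (algebraMap ℂ A) - (Qop N G).map (algebraMap ℂ A))) -
      (2 : ℂ) • (((Pop N).map (algebraMap ℂ A) - (Qop N G).map (algebraMap ℂ A)) * emb1 S)) :
    let S' := G.map (algebraMap ℂ A) * Sᵀ * (G⁻¹).map (algebraMap ℂ A)
    let Fb : Matrix (Fin N) (Fin N) A := (4 : ℂ)⁻¹ • (S - S')
    (emb1 Fb * emb2 Fb - emb2 Fb * emb1 Fb =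
      emb1 Fb * ((Pop N).map (algebraMap ℂ A) - (Qop N G).map (algebraMap ℂ A)) -
      ((Pop N).map (algebraMap ℂ A) - (Qop N G).map (algebraMap ℂ A)) * emb1 Fb) ∧
    Fb + G.map (algebraMap ℂ A) * Fbᵀ * (G⁻¹).map (algebraMap ℂ A) = 0 := by
  intro S' Fb
  have hFb : Fb = (4 : ℂ)⁻¹ • (S - gTranspose G S) := rfl
  obtain ⟨hGt, he⟩ : Gᵀ = e • G ∧ e ≠ 0 := by
    rcases he with ⟨rfl, hGt⟩ | ⟨rfl, hGt⟩ <;> simp [hGt]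
  have hCt := conj_partialTranspose1_Pop_sub_Qop hG he hGt
  have hCs : (Pop N - Qop N G).submatrix Prod.swap Prod.swap = Pop N - Qop N G := by
    change (Pop N).submatrix _ _ - (Qop N G).submatrix _ _ = _
    rw [Pop_submatrix_swap, Qop_submatrix_swap hG he hGt]
  rw [← Matrix.map_sub _ (map_sub (algebraMap ℂ A))] at hrel ⊢
  have hSS : ⁅emb1 S, emb2 S⁆ = (2 : ℂ) • ⁅emb1 S, (Pop N - Qop N G).map (algebraMap ℂ A)⁆ := by
    rw [Ring.lie_def, Ring.lie_def, hrel, smul_sub]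
  have key := lie_emb1_emb2_sub_gTranspose hG hCt hCs hSS
  rw [hFb]
  refine ⟨?_, ?_⟩
  · simp only [← Ring.lie_def, emb1_smul, emb2_smul, smul_lie, lie_smul, key]
    module
  · change _ + gTranspose G _ = 0
    rw [gTranspose_smul, gTranspose_sub, gTranspose_gTranspose hG he hGt, ← smul_add]
    simp

end
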